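/- arXiv:1701.06663 — 4 statements merged into one kernel-verified Lean document; each statement's English description precedes it below -/
import Mathlib

section
/- Let (V_n)_{n≥1} be a sequence of finite Borel measures on (0,∞) with limsup_n 𝓛_{V_n}(0) > 0. Then the sequence of Laplace transforms (𝓛_{V_n})_{n≥1} has a pre-cutoff if and only if it has a cutoff. -/
open MeasureTheory Filter Set Topology


open scoped ENNReal

/-- The Laplace transform `𝓛_V(t) = ∫_{(0,∞)} e^{-tλ} dV(λ)` of a (finite Borel) measure `V`
on `(0,∞)`. -/
noncomputable def lap (V : Measure ℝ) (t : ℝ) : ℝ :=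
  ∫ x in Ioi (0 : ℝ), Real.exp (-t * x) ∂V

/-- `M = limsup_n 𝓛_{V_n}(0)`, computed in `ℝ≥0∞`. -/
noncomputable def MlimE (V : ℕ → Measure ℝ) : ℝ≥0∞ :=
  Filter.limsup (fun n => ENNReal.ofReal (lap (V n) 0)) atTop

/-- The sequence of Laplace transforms `(𝓛_{V_n})` has a cutoff: for some positive `t_n`,
`𝓛_{V_n}(a t_n) → 0` for every `a > 1` and `𝓛_{V_n}(a t_n) → M` for every `0 < a < 1`
(convergence to `M` being understood in `ℝ≥0∞`, so it means `→ ∞` when `M = ∞`). -/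
def LapCutoffGen (V : ℕ → Measure ℝ) : Prop :=
  ∃ t : ℕ → ℝ, (∀ᶠ n in atTop, 0 < t n) ∧
    (∀ a : ℝ, 1 < a → Tendsto (fun n => lap (V n) (a * t n)) atTop (𝓝 0)) ∧
    (∀ a : ℝ, a ∈ Ioo (0 : ℝ) 1 →
      Tendsto (fun n => ENNReal.ofReal (lap (V n) (a * t n))) atTop (𝓝 (MlimE V)))

/-- The sequence of Laplace transforms `(𝓛_{V_n})` has a pre-cutoff: for some positive `t_n`
and constants `0 < A < B`, `𝓛_{V_n}(B t_n) → 0` and `liminf_n 𝓛_{V_n}(A t_n) > 0`. -/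
def LapPreCutoff (V : ℕ → Measure ℝ) : Prop :=
  ∃ (t : ℕ → ℝ) (A B : ℝ), 0 < A ∧ A < B ∧ (∀ᶠ n in atTop, 0 < t n) ∧
    Tendsto (fun n => lap (V n) (B * t n)) atTop (𝓝 0) ∧
    0 < Filter.liminf (fun n => ENNReal.ofReal (lap (V n) (A * t n))) atTop

/-! By Hölder's inequality `t ↦ 𝓛_V(t)` is log-convex on `[0, ∞)`. Given a pre-cutoff at times
`t_n`, the intermediate value theorem yields times `u_n ∈ [A t_n, B t_n]` at which `𝓛_{V_n}` takes
a fixed value `d > 0`, and `𝓛_{V_n}(c u_n) → 0` for `c = B / A`. Interpolating between `u_n` and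
`c u_n` gives `𝓛_{V_n}(a u_n) ≤ d^θ 𝓛_{V_n}(c u_n)^(1-θ) → 0` for `1 < a ≤ c` (hence for all
`a > 1` by monotonicity), while extrapolating below `u_n` gives
`d ≤ 𝓛_{V_n}(a u_n)^θ 𝓛_{V_n}(c u_n)^(1-θ)`, which forces `𝓛_{V_n}(a u_n) → ∞` for `a < 1`.
Hence `M = ∞` and `(u_n)` is a cutoff sequence. -/

theorem integral_rpow_mul_rpow_le {α : Type*} [MeasurableSpace α]
    {μ : Measure α} {f g : α → ℝ} (hf0 : 0 ≤ᵐ[μ] f) (hg0 : 0 ≤ᵐ[μ] g)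
    (hf : Integrable f μ) (hg : Integrable g μ) {θ : ℝ} (hθ0 : 0 ≤ θ) (hθ1 : θ ≤ 1) :
    ∫ a, f a ^ θ * g a ^ (1 - θ) ∂μ ≤ (∫ a, f a ∂μ) ^ θ * (∫ a, g a ∂μ) ^ (1 - θ) := by
  have h1θ : 0 ≤ 1 - θ := sub_nonneg.2 hθ1
  have hfg0 : 0 ≤ᵐ[μ] fun a => f a ^ θ * g a ^ (1 - θ) := by
    filter_upwards [hf0, hg0] with a hfa hga
    exact mul_nonneg (Real.rpow_nonneg hfa θ) (Real.rpow_nonneg hga _)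
  have hofReal : (fun a => ENNReal.ofReal (f a ^ θ * g a ^ (1 - θ))) =ᵐ[μ]
      fun a => ENNReal.ofReal (f a) ^ θ * ENNReal.ofReal (g a) ^ (1 - θ) := by
    filter_upwards [hf0, hg0] with a hfa hga
    rw [ENNReal.ofReal_mul (Real.rpow_nonneg hfa θ), ENNReal.ofReal_rpow_of_nonneg hfa hθ0,
      ENNReal.ofReal_rpow_of_nonneg hga h1θ]
  have hHolder := ENNReal.lintegral_mul_norm_pow_le hf.aemeasurable.ennreal_ofReal
    hg.aemeasurable.ennreal_ofReal hθ0 h1θ (add_sub_cancel θ 1)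
  rw [integral_eq_lintegral_of_nonneg_ae hfg0
      ((hf.aemeasurable.pow_const θ).mul (hg.aemeasurable.pow_const _)).aestronglyMeasurable,
    integral_eq_lintegral_of_nonneg_ae hf0 hf.1, integral_eq_lintegral_of_nonneg_ae hg0 hg.1,
    lintegral_congr_ae hofReal, ENNReal.toReal_rpow, ENNReal.toReal_rpow, ← ENNReal.toReal_mul]
  exact ENNReal.toReal_mono (ENNReal.mul_ne_top
    (ENNReal.rpow_ne_top_of_nonneg hθ0 hf.lintegral_lt_top.ne)
    (ENNReal.rpow_ne_top_of_nonneg h1θ hg.lintegral_lt_top.ne)) hHolder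

lemma lap_nonneg (V : Measure ℝ) (t : ℝ) : 0 ≤ lap V t :=
  setIntegral_nonneg measurableSet_Ioi fun _ _ => (Real.exp_pos _).le

lemma integrableOn_exp_neg_mul_Ioi (V : Measure ℝ) [IsFiniteMeasure V] {t : ℝ} (ht : 0 ≤ t) :
    IntegrableOn (fun x => Real.exp (-t * x)) (Ioi 0) V := by
  refine Integrable.mono' (integrable_const 1) (by fun_prop) ?_
  filter_upwards [ae_restrict_mem measurableSet_Ioi] with x hx
  rw [Real.norm_of_nonneg (Real.exp_pos _).le, Real.exp_le_one_iff]
  nlinarith [mem_Ioi.1 hx]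

lemma lap_antitoneOn (V : Measure ℝ) [IsFiniteMeasure V] : AntitoneOn (lap V) (Ici 0) :=
  fun t ht s _ hts =>
  setIntegral_mono_on (integrableOn_exp_neg_mul_Ioi V (le_trans ht hts))
    (integrableOn_exp_neg_mul_Ioi V ht) measurableSet_Ioi fun x hx =>
    Real.exp_le_exp.2 (by nlinarith [mem_Ioi.1 hx])

lemma lap_continuousOn (V : Measure ℝ) [IsFiniteMeasure V] : ContinuousOn (lap V) (Ici 0) := by
  intro t₀ _
  refine tendsto_integral_filter_of_dominated_convergence (fun _ => 1)
    (Eventually.of_forall fun _ => by fun_prop) ?_ (integrable_const 1)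
    (Eventually.of_forall fun x =>
      ((by fun_prop : Continuous fun t : ℝ => Real.exp (-t * x)).tendsto t₀).mono_left
        nhdsWithin_le_nhds)
  filter_upwards [self_mem_nhdsWithin] with t ht
  filter_upwards [ae_restrict_mem measurableSet_Ioi] with x hx
  rw [Real.norm_of_nonneg (Real.exp_pos _).le, Real.exp_le_one_iff]
  nlinarith [mem_Ioi.1 hx, mem_Ici.1 ht]

lemma lap_convex_comb_le (V : Measure ℝ) [IsFiniteMeasure V] {x y θ : ℝ} (hx : 0 ≤ x)
    (hy : 0 ≤ y) (hθ0 : 0 ≤ θ) (hθ1 : θ ≤ 1) :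
    lap V (θ * x + (1 - θ) * y) ≤ lap V x ^ θ * lap V y ^ (1 - θ) := by
  have hexp (a : ℝ) : Real.exp (-(θ * x + (1 - θ) * y) * a) =
      Real.exp (-x * a) ^ θ * Real.exp (-y * a) ^ (1 - θ) := by
    rw [← Real.exp_mul, ← Real.exp_mul, ← Real.exp_add]
    ring_nf
  simp only [lap, hexp]
  exact integral_rpow_mul_rpow_le (Eventually.of_forall fun _ => (Real.exp_pos _).le)
    (Eventually.of_forall fun _ => (Real.exp_pos _).le) (integrableOn_exp_neg_mul_Ioi V hx)
    (integrableOn_exp_neg_mul_Ioi V hy) hθ0 hθ1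

lemma exists_lap_eq_of_mem_Icc (V : Measure ℝ) [IsFiniteMeasure V] {s t d : ℝ} (hs : 0 ≤ s)
    (hst : s ≤ t) (hd : d ∈ Icc (lap V t) (lap V s)) : ∃ w ∈ Icc s t, lap V w = d :=
  intermediate_value_Icc' hst ((lap_continuousOn V).mono fun _ hw => hs.trans hw.1) hd

lemma MlimE_eq_top_of_tendsto_atTop {V : ℕ → Measure ℝ}
    (h : Tendsto (fun n => lap (V n) 0) atTop atTop) : MlimE V = ∞ :=
  (ENNReal.tendsto_ofReal_atTop.comp h).limsup_eq

lemma LapCutoffGen.lapPreCutoff {V : ℕ → Measure ℝ} (hM : 0 < MlimE V) (h : LapCutoffGen V) :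
    LapPreCutoff V := by
  obtain ⟨t, ht, hzero, hmass⟩ := h
  refine ⟨t, 1 / 2, 2, by norm_num, by norm_num, ht, hzero 2 one_lt_two, ?_⟩
  rwa [(hmass (1 / 2) ⟨by norm_num, by norm_num⟩).liminf_eq]

section LevelTimes

variable {V : ℕ → Measure ℝ} [∀ n, IsFiniteMeasure (V n)] {u : ℕ → ℝ} {c d a : ℝ}

lemma tendsto_lap_mul_nhds_zero (hu : ∀ᶠ n in atTop, 0 < u n) (hc : 1 < c)
    (hcu : Tendsto (fun n => lap (V n) (c * u n)) atTop (𝓝 0))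
    (hd : ∀ᶠ n in atTop, lap (V n) (u n) ≤ d) (ha : 1 < a) :
    Tendsto (fun n => lap (V n) (a * u n)) atTop (𝓝 0) := by
  set b := min a c
  set θ := (c - b) / (c - 1)
  have hb : 1 < b := lt_min ha hc
  have hθ : θ * (c - 1) = c - b := div_mul_cancel₀ _ (by linarith)
  have hθ0 : 0 ≤ θ := div_nonneg (sub_nonneg.2 (min_le_right a c)) (by linarith)
  have hθ1 : θ < 1 := (div_lt_one (by linarith)).2 (by linarith)
  have hpow : Tendsto (fun n => lap (V n) (c * u n) ^ (1 - θ)) atTop (𝓝 0) := by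
    simpa [Real.zero_rpow (sub_pos.2 hθ1).ne'] using hcu.rpow_const (Or.inr (sub_pos.2 hθ1).le)
  refine squeeze_zero' (Eventually.of_forall fun n => lap_nonneg _ _) ?_
    (by simpa using hpow.const_mul (d ^ θ))
  filter_upwards [hu, hd] with n hun hdn
  calc lap (V n) (a * u n) ≤ lap (V n) (b * u n) :=
        lap_antitoneOn _ (mem_Ici.2 (by positivity)) (mem_Ici.2 (by positivity))
          (mul_le_mul_of_nonneg_right (min_le_left a c) hun.le)
    _ = lap (V n) (θ * u n + (1 - θ) * (c * u n)) := by
        congr 1; linear_combination (u n) * hθ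
    _ ≤ lap (V n) (u n) ^ θ * lap (V n) (c * u n) ^ (1 - θ) :=
        lap_convex_comb_le _ hun.le (by positivity) hθ0 hθ1.le
    _ ≤ d ^ θ * lap (V n) (c * u n) ^ (1 - θ) :=
        mul_le_mul_of_nonneg_right (Real.rpow_le_rpow (lap_nonneg _ _) hdn hθ0)
          (Real.rpow_nonneg (lap_nonneg _ _) _)

lemma tendsto_lap_mul_atTop (hu : ∀ᶠ n in atTop, 0 < u n) (hc : 1 < c)
    (hcu : Tendsto (fun n => lap (V n) (c * u n)) atTop (𝓝 0)) (hd0 : 0 < d)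
    (hd : ∀ᶠ n in atTop, d ≤ lap (V n) (u n)) (ha0 : 0 < a) (ha1 : a < 1) :
    Tendsto (fun n => lap (V n) (a * u n)) atTop atTop := by
  set θ := (c - 1) / (c - a)
  have hθ : θ * (c - a) = c - 1 := div_mul_cancel₀ _ (by linarith)
  have hθ0 : 0 ≤ θ := div_nonneg (by linarith) (by linarith)
  have hθ1 : θ < 1 := (div_lt_one (by linarith)).2 (by linarith)
  have hpow : Tendsto (fun n => lap (V n) (c * u n) ^ (1 - θ)) atTop (𝓝 0) := by
    simpa [Real.zero_rpow (sub_pos.2 hθ1).ne'] using hcu.rpow_const (Or.inr (sub_pos.2 hθ1).le)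
  refine tendsto_atTop.2 fun K => ?_
  have hsmall :=
    (hpow.const_mul (K ^ θ)).eventually_lt_const (show K ^ θ * 0 < d by rwa [mul_zero])
  filter_upwards [hu, hd, hsmall] with n hun hdn hsmall
  by_contra! hK
  have : d ≤ K ^ θ * lap (V n) (c * u n) ^ (1 - θ) :=
    calc d ≤ lap (V n) (u n) := hdn
      _ = lap (V n) (θ * (a * u n) + (1 - θ) * (c * u n)) := by
          congr 1; linear_combination (u n) * hθ
      _ ≤ lap (V n) (a * u n) ^ θ * lap (V n) (c * u n) ^ (1 - θ) :=
          lap_convex_comb_le _ (by positivity) (by positivity) hθ0 hθ1.le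
      _ ≤ K ^ θ * lap (V n) (c * u n) ^ (1 - θ) :=
          mul_le_mul_of_nonneg_right (Real.rpow_le_rpow (lap_nonneg _ _) hK.le hθ0)
            (Real.rpow_nonneg (lap_nonneg _ _) _)
  linarith

lemma LapPreCutoff.exists_level_times (h : LapPreCutoff V) :
    ∃ (u : ℕ → ℝ) (c d : ℝ), 1 < c ∧ 0 < d ∧ (∀ᶠ n in atTop, 0 < u n) ∧
      (∀ᶠ n in atTop, lap (V n) (u n) = d) ∧
      Tendsto (fun n => lap (V n) (c * u n)) atTop (𝓝 0) := by
  obtain ⟨t, A, B, hA, hAB, ht, hB, hliminf⟩ := h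
  obtain ⟨d, -, hd0, hdlim⟩ := ENNReal.lt_iff_exists_real_btwn.1 hliminf
  have hd : 0 < d := ENNReal.ofReal_pos.1 hd0
  have hlevel : ∀ᶠ n in atTop, ∃ w ∈ Icc (A * t n) (B * t n), lap (V n) w = d := by
    filter_upwards [ht, eventually_lt_of_lt_liminf hdlim, hB.eventually_lt_const hd]
      with n htn hAn hBn
    exact exists_lap_eq_of_mem_Icc _ (by positivity) (by gcongr)
      ⟨hBn.le, (ENNReal.ofReal_lt_ofReal_iff'.1 hAn).1.le⟩
  obtain ⟨u, hu⟩ := hlevel.choice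
  have hB0 : 0 < B := hA.trans hAB
  have hBA : B / A * A = B := div_mul_cancel₀ B hA.ne'
  refine ⟨u, B / A, d, (one_lt_div hA).2 hAB, hd, ?_, hu.mono fun _ h => h.2, ?_⟩
  · filter_upwards [ht, hu] with n htn hun
    exact lt_of_lt_of_le (by positivity) hun.1.1
  · refine squeeze_zero' (Eventually.of_forall fun n => lap_nonneg _ _) ?_ hB
    filter_upwards [ht, hu] with n htn hun
    have hBt : 0 ≤ B * t n := by positivity
    have hle : B * t n ≤ B / A * u n :=
      calc B * t n = B / A * (A * t n) := by rw [← mul_assoc, hBA]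
        _ ≤ B / A * u n := mul_le_mul_of_nonneg_left hun.1.1 (by positivity)
    exact lap_antitoneOn _ hBt (hBt.trans hle) hle

lemma LapPreCutoff.lapCutoffGen (h : LapPreCutoff V) : LapCutoffGen V := by
  obtain ⟨u, c, d, hc, hd, hu, hud, hcu⟩ := h.exists_level_times
  have hmass (a : ℝ) (ha : a ∈ Ioo 0 1) :
      Tendsto (fun n => lap (V n) (a * u n)) atTop atTop :=
    tendsto_lap_mul_atTop hu hc hcu hd (hud.mono fun _ h => h.ge) ha.1 ha.2
  have hM : MlimE V = ∞ := by
    refine MlimE_eq_top_of_tendsto_atTop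
      (tendsto_atTop_mono' _ ?_ (hmass (1 / 2) ⟨by norm_num, by norm_num⟩))
    filter_upwards [hu] with n hun
    exact lap_antitoneOn _ self_mem_Ici (mem_Ici.2 (by positivity)) (by positivity)
  refine ⟨u, hu, fun a ha => tendsto_lap_mul_nhds_zero hu hc hcu (hud.mono fun _ h => h.le) ha,
    fun a ha => ?_⟩
  rw [hM]
  exact ENNReal.tendsto_ofReal_atTop.comp (hmass a ha)

end LevelTimes

theorem stmt_1_general (V : ℕ → Measure ℝ) [∀ n, IsFiniteMeasure (V n)]
    (hM : 0 < MlimE V) :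
    LapPreCutoff V ↔ LapCutoffGen V :=
  ⟨LapPreCutoff.lapCutoffGen, LapCutoffGen.lapPreCutoff hM⟩

theorem stmt_1 (V : ℕ → Measure ℝ) [∀ n, IsFiniteMeasure (V n)]
    (hsupp : ∀ n, V n (Iic 0) = 0)
    (hM : 0 < MlimE V) :
    LapPreCutoff V ↔ LapCutoffGen V :=
  stmt_1_general V hM
end

section
/- Let (V_n)_{n≥1} be a sequence of finite Borel measures on (0,∞) with 𝓛_{V_n}(0) → ∞, and let 0 < c < c′. Then: (i) for any fixed ε > 0, if T_{V_n}(ε)·λ_{V_n}(c) → ∞ then T_{V_n}(ε)·λ_{V_n}(c′) → ∞; and (ii) if τ_{V_n}(c)·λ_{V_n}(c) → ∞ then τ_{V_n}(c′)·λ_{V_n}(c′) → ∞. -/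
open MeasureTheory Filter Set Topology

/-- `V(λ) = V((0,λ])`, the nondecreasing right-continuous function associated to `V`. -/
noncomputable def cdfV (V : Measure ℝ) (l : ℝ) : ℝ :=
  (V (Ioc 0 l)).toReal

/-- The mixing time `T_V(ε) = min{t ≥ 0 : 𝓛_V(t) ≤ ε}`. -/
noncomputable def TmixV (V : Measure ℝ) (ε : ℝ) : ℝ :=
  sInf {t : ℝ | 0 ≤ t ∧ lap V t ≤ ε}

/-- `λ_V(c) = inf{λ > 0 : V(λ) > c}`. -/
noncomputable def lamV (V : Measure ℝ) (c : ℝ) : ℝ :=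
  sInf {l : ℝ | 0 < l ∧ c < cdfV V l}

/-- `τ_V(c) = sup_{λ ≥ λ_V(c)} log(1 + V(λ))/λ`. -/
noncomputable def tauV (V : Measure ℝ) (c : ℝ) : ℝ :=
  sSup ((fun l => Real.log (1 + cdfV V l) / l) '' Ici (lamV V c))

/-- `t` is a cutoff time for the sequence of Laplace transforms `(𝓛_{V_n})` (in the regime
`𝓛_{V_n}(0) → ∞`): `𝓛_{V_n}(a t_n) → 0` for `a > 1` and `𝓛_{V_n}(a t_n) → ∞` for `0 < a < 1`. -/
def IsLapCutoffTime (V : ℕ → Measure ℝ) (t : ℕ → ℝ) : Prop :=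
  (∀ᶠ n in atTop, 0 < t n) ∧
    (∀ a : ℝ, 1 < a → Tendsto (fun n => lap (V n) (a * t n)) atTop (𝓝 0)) ∧
    (∀ a : ℝ, a ∈ Ioo (0 : ℝ) 1 → Tendsto (fun n => lap (V n) (a * t n)) atTop atTop)

/-- The sequence of Laplace transforms `(𝓛_{V_n})` has a cutoff. -/
def LapCutoff (V : ℕ → Measure ℝ) : Prop :=
  ∃ t : ℕ → ℝ, IsLapCutoffTime V t

/-!
Once the total mass `𝓛_V(0)` exceeds `c'`, `λ_V(c) ≤ λ_V(c')`, which gives (i). For (ii),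
`τ_V(c) λ_V(c) ≤ max (τ_V(c') λ_V(c')) (log (1 + c'))` holds for every `V`, and the left side
eventually exceeds the constant `log (1 + c')`.
-/

lemma lap_zero (V : Measure ℝ) : lap V 0 = (V (Ioi 0)).toReal := by
  simp [lap, measureReal_def]

lemma tendsto_cdfV_atTop (V : Measure ℝ) [IsFiniteMeasure V] :
    Tendsto (cdfV V) atTop (𝓝 (lap V 0)) := by
  have h := tendsto_measure_Iic_atTop (V.restrict (Ioi 0))
  simp only [Measure.restrict_apply measurableSet_Iic, Measure.restrict_apply_univ,
    Iic_inter_Ioi] at h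
  rw [lap_zero]
  exact (ENNReal.tendsto_toReal (measure_ne_top _ _)).comp h

lemma exists_lt_cdfV (V : Measure ℝ) [IsFiniteMeasure V] {c : ℝ} (hc : c < lap V 0) :
    {l : ℝ | 0 < l ∧ c < cdfV V l}.Nonempty :=
  ((eventually_gt_atTop 0).and ((tendsto_cdfV_atTop V).eventually (eventually_gt_nhds hc))).exists

lemma cdfV_nonneg (V : Measure ℝ) (l : ℝ) : 0 ≤ cdfV V l := ENNReal.toReal_nonneg

lemma lamV_nonneg (V : Measure ℝ) (c : ℝ) : 0 ≤ lamV V c :=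
  Real.sInf_nonneg fun _ hl => hl.1.le

lemma TmixV_nonneg (V : Measure ℝ) (ε : ℝ) : 0 ≤ TmixV V ε :=
  Real.sInf_nonneg fun _ ht => ht.1

lemma lamV_le_of_lt_cdfV (V : Measure ℝ) {c l : ℝ} (hl : 0 < l) (hcl : c < cdfV V l) :
    lamV V c ≤ l :=
  csInf_le ⟨0, fun _ hx => hx.1.le⟩ ⟨hl, hcl⟩

lemma lamV_mono (V : Measure ℝ) {c c' : ℝ} (hcc' : c ≤ c')
    (hne : {l : ℝ | 0 < l ∧ c' < cdfV V l}.Nonempty) : lamV V c ≤ lamV V c' :=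
  csInf_le_csInf ⟨0, fun _ hx => hx.1.le⟩ hne fun _ hl => ⟨hl.1, hcc'.trans_lt hl.2⟩

lemma tauV_nonneg (V : Measure ℝ) (c : ℝ) : 0 ≤ tauV V c := by
  refine Real.sSup_nonneg ?_
  rintro _ ⟨l, hl, rfl⟩
  exact div_nonneg (Real.log_nonneg (by linarith [cdfV_nonneg V l]))
    ((lamV_nonneg V c).trans hl)

/-- Splitting `l ≥ λ_V(c)` according to whether `V(l) > c'`: above `λ_V(c')` the quotient is
at most `τ_V(c')`, below it `log (1 + V(l)) ≤ log (1 + c')` and `λ_V(c) / l ≤ 1`. -/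
lemma tauV_mul_lamV_le_max (V : Measure ℝ) {c c' : ℝ} (hcc' : c ≤ c') :
    tauV V c * lamV V c ≤ max (tauV V c' * lamV V c') (Real.log (1 + c')) := by
  have hnonneg : 0 ≤ tauV V c' * lamV V c' := mul_nonneg (tauV_nonneg V c') (lamV_nonneg V c')
  rcases (lamV_nonneg V c).eq_or_lt with hzero | hpos
  · rw [← hzero, mul_zero]
    exact le_max_of_le_left hnonneg
  set f : ℝ → ℝ := fun l => Real.log (1 + cdfV V l) / l
  by_cases hbdd : BddAbove (f '' Ici (lamV V c))
  swap
  · rw [tauV, Real.sSup_of_not_bddAbove hbdd, zero_mul]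
    exact le_max_of_le_left hnonneg
  rw [← le_div_iff₀ hpos, tauV]
  refine csSup_le (nonempty_Ici.image f) ?_
  rintro _ ⟨l, hl, rfl⟩
  have hl0 : 0 < l := hpos.trans_le hl
  rw [le_div_iff₀ hpos]
  by_cases hcl : c' < cdfV V l
  · have hmono : lamV V c ≤ lamV V c' := lamV_mono V hcc' ⟨l, hl0, hcl⟩
    have hfl : f l ≤ tauV V c' :=
      le_csSup (hbdd.mono (image_mono (Ici_subset_Ici.2 hmono)))
        ⟨l, lamV_le_of_lt_cdfV V hl0 hcl, rfl⟩
    exact le_max_of_le_left (mul_le_mul hfl hmono hpos.le (tauV_nonneg V c'))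
  · have hlog : 0 ≤ Real.log (1 + cdfV V l) := Real.log_nonneg (by linarith [cdfV_nonneg V l])
    calc f l * lamV V c = Real.log (1 + cdfV V l) * (lamV V c / l) := by ring
      _ ≤ Real.log (1 + cdfV V l) := mul_le_of_le_one_right hlog ((div_le_one hl0).2 hl)
      _ ≤ Real.log (1 + c') :=
        Real.log_le_log (by linarith [cdfV_nonneg V l]) (by linarith)
      _ ≤ _ := le_max_right _ _

theorem stmt_5_general (V : ℕ → Measure ℝ) [∀ n, IsFiniteMeasure (V n)]
    (hdiv : Tendsto (fun n => lap (V n) 0) atTop atTop)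
    (c c' : ℝ) (hcc' : c < c') :
    (∀ ε > (0 : ℝ),
      Tendsto (fun n => TmixV (V n) ε * lamV (V n) c) atTop atTop →
        Tendsto (fun n => TmixV (V n) ε * lamV (V n) c') atTop atTop) ∧
      (Tendsto (fun n => tauV (V n) c * lamV (V n) c) atTop atTop →
        Tendsto (fun n => tauV (V n) c' * lamV (V n) c') atTop atTop) := by
  refine ⟨fun ε _ hT => tendsto_atTop_mono' atTop ?_ hT, fun hτ => tendsto_atTop_mono' atTop ?_ hτ⟩
  · filter_upwards [hdiv.eventually_gt_atTop c'] with n hn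
    exact mul_le_mul_of_nonneg_left (lamV_mono (V n) hcc'.le (exists_lt_cdfV (V n) hn))
      (TmixV_nonneg (V n) ε)
  · filter_upwards [hτ.eventually_gt_atTop (Real.log (1 + c'))] with n hn
    exact (le_max_iff.1 (tauV_mul_lamV_le_max (V n) hcc'.le)).resolve_right hn.not_ge

theorem stmt_5 (V : ℕ → Measure ℝ) [∀ n, IsFiniteMeasure (V n)]
    (hsupp : ∀ n, V n (Iic 0) = 0)
    (hdiv : Tendsto (fun n => lap (V n) 0) atTop atTop)
    (c c' : ℝ) (hc : 0 < c) (hcc' : c < c') :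
    (∀ ε > (0 : ℝ),
      Tendsto (fun n => TmixV (V n) ε * lamV (V n) c) atTop atTop →
        Tendsto (fun n => TmixV (V n) ε * lamV (V n) c') atTop atTop) ∧
      (Tendsto (fun n => tauV (V n) c * lamV (V n) c) atTop atTop →
        Tendsto (fun n => tauV (V n) c' * lamV (V n) c') atTop atTop) :=
  stmt_5_general V hdiv c c' hcc'
end

section
/- Let V be a finite Borel measure on (0,∞) and let ε, c₁, c₂ be constants in (0, 𝓛_V(0)) with c₁ < c₂. Then 𝓛_V(T_V(ε)) = ε, and for all r ≥ 0 and s > 0 one has 𝓛_V(T_V(ε) + r + s) ≤ c₁ + c₂·e^{−(T_V(ε)+r+s)·λ_V(c₁)} + ε·(T_V(ε)+r+s) / ((T_V(ε)+s)·e^{r·λ_V(c₂)}). -/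
/-!
The Laplace transform `𝓛_V` is continuous on `[0, ∞)` and tends to `0`, so by the
intermediate value theorem it takes the value `ε` at the first time `T_V(ε)` it drops to `ε`.

For the tail bound, `V` puts mass at most `c` on `(0, λ_V(c))`. Bounding `e^{-tλ}` by `1` on
`(0, λ_V(c₁))`, by `e^{-tλ_V(c₁)}` on `(0, λ_V(c₂))` and by `e^{-rλ_V(c₂)} e^{-T_V(ε)λ}` on
`[λ_V(c₂), ∞)`, where `t = T_V(ε) + r + s`, and integrating gives
`𝓛_V(t) ≤ c₁ + c₂ e^{-tλ_V(c₁)} + e^{-rλ_V(c₂)} ε`.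
-/

open MeasureTheory Filter Set Topology

lemma norm_exp_neg_mul_le_one {t x : ℝ} (ht : 0 ≤ t) (hx : 0 ≤ x) : ‖Real.exp (-t * x)‖ ≤ 1 := by
  rw [Real.norm_of_nonneg (Real.exp_pos _).le, Real.exp_le_one_iff]
  nlinarith

lemma aestronglyMeasurable_exp_neg_mul (t : ℝ) (μ : Measure ℝ) :
    AEStronglyMeasurable (fun x : ℝ => Real.exp (-t * x)) μ := by
  fun_prop

lemma ae_restrict_norm_exp_neg_mul_le_one (V : Measure ℝ) {t : ℝ} (ht : 0 ≤ t) :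
    ∀ᵐ x ∂V.restrict (Ioi 0), ‖Real.exp (-t * x)‖ ≤ 1 := by
  filter_upwards [ae_restrict_mem measurableSet_Ioi] with x hx
  exact norm_exp_neg_mul_le_one ht (le_of_lt hx)

section LaplaceTransform

variable (V : Measure ℝ) [IsFiniteMeasure V]

lemma integrableOn_exp_neg_mul {t : ℝ} (ht : 0 ≤ t) :
    IntegrableOn (fun x : ℝ => Real.exp (-t * x)) (Ioi 0) V :=
  (integrable_const 1).mono' (aestronglyMeasurable_exp_neg_mul t _)
    (ae_restrict_norm_exp_neg_mul_le_one V ht)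

lemma continuousOn_lap : ContinuousOn (lap V) (Ici 0) := fun t₀ _ =>
  continuousWithinAt_of_dominated (bound := fun _ => 1)
    (Eventually.of_forall fun t => aestronglyMeasurable_exp_neg_mul t _)
    (eventually_nhdsWithin_of_forall fun _ ht => ae_restrict_norm_exp_neg_mul_le_one V ht)
    (integrable_const 1) (ae_of_all _ fun _ => by fun_prop)

lemma tendsto_lap_atTop : Tendsto (lap V) atTop (𝓝 0) := by
  rw [← integral_zero ℝ ℝ]
  refine tendsto_integral_filter_of_dominated_convergence (fun _ => 1)
    (Eventually.of_forall fun t => aestronglyMeasurable_exp_neg_mul t _)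
    ((eventually_ge_atTop 0).mono fun _ ht => ae_restrict_norm_exp_neg_mul_le_one V ht)
    (integrable_const 1) ?_
  filter_upwards [ae_restrict_mem measurableSet_Ioi] with x hx
  exact Real.tendsto_exp_atBot.comp (tendsto_neg_atTop_atBot.atBot_mul_const hx)

end LaplaceTransform

lemma apply_sInf_setOf_le_eq {f : ℝ → ℝ} {ε : ℝ} (hf : ContinuousOn f (Ici 0)) (hf0 : ε ≤ f 0)
    (hne : {t | 0 ≤ t ∧ f t ≤ ε}.Nonempty) : f (sInf {t | 0 ≤ t ∧ f t ≤ ε}) = ε := by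
  set S := {t | 0 ≤ t ∧ f t ≤ ε}
  have hbdd : BddBelow S := ⟨0, fun t ht => ht.1⟩
  have hclosed : IsClosed S := hf.preimage_isClosed_of_isClosed isClosed_Ici isClosed_Iic
  obtain ⟨hT0, hTε⟩ : sInf S ∈ S := hclosed.csInf_mem hne hbdd
  obtain ⟨t, ⟨ht0, htT⟩, hft⟩ :=
    intermediate_value_Icc' hT0 (hf.mono Icc_subset_Ici_self) ⟨hTε, hf0⟩
  rwa [le_antisymm htT (csInf_le hbdd ⟨ht0, hft.le⟩)] at hft

lemma exp_neg_mul_le_indicator_add {t T r l₁ l₂ x : ℝ} (hx : 0 < x) (hT : 0 ≤ T) (hr : 0 ≤ r)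
    (ht : T + r ≤ t) :
    Real.exp (-t * x) ≤ (Iio l₁).indicator 1 x + Real.exp (-t * l₁) * (Iio l₂).indicator 1 x +
      Real.exp (-r * l₂) * Real.exp (-T * x) := by
  have htail : 0 ≤ Real.exp (-r * l₂) * Real.exp (-T * x) := by positivity
  by_cases h₁ : x < l₁
  · have hmid : 0 ≤ Real.exp (-t * l₁) * (Iio l₂).indicator 1 x :=
      mul_nonneg (Real.exp_pos _).le (indicator_nonneg (fun _ _ => zero_le_one) _)
    have hle : Real.exp (-t * x) ≤ 1 := Real.exp_le_one_iff.mpr (by nlinarith)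
    rw [indicator_of_mem (mem_Iio.mpr h₁), Pi.one_apply]
    linarith
  rw [indicator_of_notMem (mt mem_Iio.mp h₁)]
  by_cases h₂ : x < l₂
  · rw [indicator_of_mem (mem_Iio.mpr h₂), Pi.one_apply, mul_one, zero_add]
    have : Real.exp (-t * x) ≤ Real.exp (-t * l₁) :=
      Real.exp_le_exp.mpr (by nlinarith [not_lt.mp h₁])
    linarith
  · rw [indicator_of_notMem (mt mem_Iio.mp h₂), mul_zero, zero_add, zero_add, ← Real.exp_add]
    exact Real.exp_le_exp.mpr (by nlinarith [not_lt.mp h₂])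

lemma cdfV_le_of_lt_lamV (V : Measure ℝ) {c l : ℝ} (hl : 0 < l) (hlt : l < lamV V c) :
    cdfV V l ≤ c :=
  not_lt.mp fun h => notMem_of_lt_csInf hlt ⟨0, fun _ h => h.1.le⟩ ⟨hl, h⟩

lemma measureReal_Ioo_lamV_le (V : Measure ℝ) [IsFiniteMeasure V] {c : ℝ} (hc : 0 ≤ c) :
    V.real (Ioo 0 (lamV V c)) ≤ c := by
  rcases (lamV_nonneg V c).eq_or_lt with hL | hL
  · simp [← hL, hc]
  obtain ⟨u, hu_mono, hu_mem, hu_lim⟩ := exists_seq_strictMono_tendsto' hL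
  have hU : ⋃ n, Ioc 0 (u n) = Ioo 0 (lamV V c) := by
    ext x
    simp only [mem_iUnion, mem_Ioc, mem_Ioo]
    constructor
    · rintro ⟨n, hx0, hxu⟩
      exact ⟨hx0, hxu.trans_lt (hu_mem n).2⟩
    · rintro ⟨hx0, hxL⟩
      obtain ⟨n, hn⟩ := (hu_lim.eventually_const_lt hxL).exists
      exact ⟨n, hx0, hn.le⟩
  have hlim : Tendsto (fun n => cdfV V (u n)) atTop (𝓝 (V.real (Ioo 0 (lamV V c)))) := by
    rw [← hU]
    exact (ENNReal.tendsto_toReal (measure_ne_top _ _)).comp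
      (tendsto_measure_iUnion_atTop fun m n h => Ioc_subset_Ioc_right (hu_mono.monotone h))
  exact le_of_tendsto' hlim fun n => cdfV_le_of_lt_lamV V (hu_mem n).1 (hu_mem n).2

theorem lap_le_of_add_le (V : Measure ℝ) [IsFiniteMeasure V] {c₁ c₂ T r t : ℝ} (hc₁ : 0 ≤ c₁)
    (hc₂ : 0 ≤ c₂) (hT : 0 ≤ T) (hr : 0 ≤ r) (ht : T + r ≤ t) :
    lap V t ≤ c₁ + c₂ * Real.exp (-t * lamV V c₁) + Real.exp (-r * lamV V c₂) * lap V T := by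
  set l₁ := lamV V c₁
  set l₂ := lamV V c₂
  have hind : ∀ l, Integrable ((Iio l).indicator (1 : ℝ → ℝ)) (V.restrict (Ioi 0)) :=
    fun l => (integrable_const 1).indicator measurableSet_Iio
  have hmass : ∀ c, 0 ≤ c → ∫ x in Ioi 0, (Iio (lamV V c)).indicator 1 x ∂V ≤ c := by
    intro c hc
    rw [integral_indicator_one measurableSet_Iio, measureReal_restrict_apply measurableSet_Iio,
      Iio_inter_Ioi]
    exact measureReal_Ioo_lamV_le V hc
  calc lap V t ≤ ∫ x in Ioi 0, ((Iio l₁).indicator 1 x +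
        Real.exp (-t * l₁) * (Iio l₂).indicator 1 x + Real.exp (-r * l₂) * Real.exp (-T * x)) ∂V :=
      setIntegral_mono_on (integrableOn_exp_neg_mul V (by linarith))
        (((hind _).add ((hind _).const_mul _)).add ((integrableOn_exp_neg_mul V hT).const_mul _))
        measurableSet_Ioi fun x hx => exp_neg_mul_le_indicator_add hx hT hr ht
    _ = ∫ x in Ioi 0, (Iio l₁).indicator 1 x ∂V +
        Real.exp (-t * l₁) * ∫ x in Ioi 0, (Iio l₂).indicator 1 x ∂V +
        Real.exp (-r * l₂) * lap V T := by
      rw [integral_add, integral_add, integral_const_mul, integral_const_mul, lap]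
      · exact hind _
      · exact (hind _).const_mul _
      · exact (hind _).add ((hind _).const_mul _)
      · exact (integrableOn_exp_neg_mul V hT).const_mul _
    _ ≤ c₁ + c₂ * Real.exp (-t * l₁) + Real.exp (-r * l₂) * lap V T := by
      rw [mul_comm c₂]
      gcongr
      · exact hmass c₁ hc₁
      · exact hmass c₂ hc₂

lemma lap_TmixV (V : Measure ℝ) [IsFiniteMeasure V] {ε : ℝ} (hε : 0 < ε) (hεle : ε ≤ lap V 0) :
    lap V (TmixV V ε) = ε :=
  apply_sInf_setOf_le_eq (continuousOn_lap V) hεle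
    ((((tendsto_lap_atTop V).eventually (eventually_le_nhds hε)).and
      (eventually_ge_atTop 0)).exists.imp fun _ h => ⟨h.2, h.1⟩)

theorem stmt_8_general (V : Measure ℝ) [IsFiniteMeasure V]
    (ε c₁ c₂ : ℝ) (hε : 0 < ε) (hεlt : ε < lap V 0)
    (hc₁ : 0 < c₁) (hc₁₂ : c₁ < c₂) :
    lap V (TmixV V ε) = ε ∧
      ∀ r ≥ (0 : ℝ), ∀ s > (0 : ℝ),
        lap V (TmixV V ε + r + s) ≤
          c₁ + c₂ * Real.exp (-(TmixV V ε + r + s) * lamV V c₁) +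
            ε * (TmixV V ε + r + s) /
              ((TmixV V ε + s) * Real.exp (r * lamV V c₂)) := by
  have hT := TmixV_nonneg V ε
  have hlapT := lap_TmixV V hε hεlt.le
  refine ⟨hlapT, fun r hr s hs => ?_⟩
  set T := TmixV V ε
  refine (lap_le_of_add_le V hc₁.le (hc₁.trans hc₁₂).le hT hr
    (le_add_of_nonneg_right hs.le)).trans (add_le_add_right ?_ _)
  calc Real.exp (-r * lamV V c₂) * lap V T
      = ε * (T + s) / ((T + s) * Real.exp (r * lamV V c₂)) := by
        rw [hlapT, neg_mul, Real.exp_neg]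
        field_simp
    _ ≤ ε * (T + r + s) / ((T + s) * Real.exp (r * lamV V c₂)) := by
        gcongr
        linarith

theorem stmt_8 (V : Measure ℝ) [IsFiniteMeasure V] (hsupp : V (Iic 0) = 0)
    (ε c₁ c₂ : ℝ) (hε : 0 < ε) (hεlt : ε < lap V 0)
    (hc₁ : 0 < c₁) (hc₁₂ : c₁ < c₂) (hc₂lt : c₂ < lap V 0) :
    lap V (TmixV V ε) = ε ∧
      ∀ r ≥ (0 : ℝ), ∀ s > (0 : ℝ),
        lap V (TmixV V ε + r + s) ≤
          c₁ + c₂ * Real.exp (-(TmixV V ε + r + s) * lamV V c₁) +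
            ε * (TmixV V ε + r + s) /
              ((TmixV V ε + s) * Real.exp (r * lamV V c₂)) :=
  stmt_8_general V ε c₁ c₂ hε hεlt hc₁ hc₁₂
end

section
/- (1) Let (μ_n, S_n, L_n, π_n)_{n≥1} be a family of irreducible and reversible continuous-time finite Markov chains with liminf_n ∑_x μ_n(x)²/π_n(x) > 1. Then the family has an L²-cutoff if and only if it has an L²-pre-cutoff. (2) Let (μ_n, S_n, K_n, π_n)_{n≥1} be a family of irreducible and reversible discrete-time finite Markov chains such that liminf_n ∑_x (μ_nK_n)(x)²/π_n(x) > 1 and T_{n,2}(μ_n, ε₀) → ∞ for some ε₀ ∈ (0,∞). Then the family has an L²-cutoff if and only if it has an L²-pre-cutoff. -/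
open MeasureTheory Filter Set Topology

/-- The `L²`-distance `d₂(μ,t)` of a continuous-time chain on a finite set `S` with generator
`L`, initial distribution `μ` and stationary distribution `π`:
`d₂(μ,t) = (∑_y |μ e^{tL}(y)/π(y) − 1|² π(y))^{1/2}`. -/
noncomputable def d2ct {S : Type*} [Fintype S] [DecidableEq S]
    (L : Matrix S S ℝ) (μ π : S → ℝ) (t : ℝ) : ℝ :=
  Real.sqrt (∑ y, ((∑ x, μ x * NormedSpace.exp (t • L) x y) / π y - 1) ^ 2 * π y)

/-- The `L²`-distance `d₂(μ,m)` of a discrete-time chain with transition matrix `K`. -/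
noncomputable def d2dt {S : Type*} [Fintype S] [DecidableEq S]
    (K : Matrix S S ℝ) (μ π : S → ℝ) (m : ℕ) : ℝ :=
  Real.sqrt (∑ y, ((∑ x, μ x * (K ^ m) x y) / π y - 1) ^ 2 * π y)

/-- The `L²`-mixing time `T₂(μ,ε) = min{t ≥ 0 : d₂(μ,t) ≤ ε}` (continuous time). -/
noncomputable def Tmix2ct {S : Type*} [Fintype S] [DecidableEq S]
    (L : Matrix S S ℝ) (μ π : S → ℝ) (ε : ℝ) : ℝ :=
  sInf {t : ℝ | 0 ≤ t ∧ d2ct L μ π t ≤ ε}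

/-- The `L²`-mixing time `T₂(μ,ε) = min{m ≥ 0 : d₂(μ,m) ≤ ε}` (discrete time). -/
noncomputable def Tmix2dt {S : Type*} [Fintype S] [DecidableEq S]
    (K : Matrix S S ℝ) (μ π : S → ℝ) (ε : ℝ) : ℕ :=
  sInf {m : ℕ | d2dt K μ π m ≤ ε}

/-- `t` is an `L²`-cutoff time for a family of continuous-time chains with `L²`-distances
`d n ·`: for all `a ∈ (0,1)`, `d n ((1+a) t_n) → 0` and `d n ((1−a) t_n) → ∞`. -/
def IsCutoffTimeCT (d : ℕ → ℝ → ℝ) (t : ℕ → ℝ) : Prop :=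
  (∀ᶠ n in atTop, 0 < t n) ∧ ∀ a ∈ Ioo (0 : ℝ) 1,
    Tendsto (fun n => d n ((1 + a) * t n)) atTop (𝓝 0) ∧
      Tendsto (fun n => d n ((1 - a) * t n)) atTop atTop

/-- A family of continuous-time chains with `L²`-distances `d n ·` has an `L²`-cutoff. -/
def HasCutoffCT (d : ℕ → ℝ → ℝ) : Prop :=
  ∃ t : ℕ → ℝ, IsCutoffTimeCT d t

/-- `t` is an `L²`-cutoff time for a family of discrete-time chains with `L²`-distances
`d n ·`: for all `a ∈ (0,1)`, `d n ⌈(1+a) t_n⌉ → 0` and `d n ⌊(1−a) t_n⌋ → ∞`. -/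
def IsCutoffTimeDT (d : ℕ → ℕ → ℝ) (t : ℕ → ℝ) : Prop :=
  (∀ᶠ n in atTop, 0 < t n) ∧ ∀ a ∈ Ioo (0 : ℝ) 1,
    Tendsto (fun n => d n ⌈(1 + a) * t n⌉₊) atTop (𝓝 0) ∧
      Tendsto (fun n => d n ⌊(1 - a) * t n⌋₊) atTop atTop

/-- A family of discrete-time chains with `L²`-distances `d n ·` has an `L²`-cutoff. -/
def HasCutoffDT (d : ℕ → ℕ → ℝ) : Prop :=
  ∃ t : ℕ → ℝ, IsCutoffTimeDT d t

/-- A continuous-time generator matrix: nonnegative off-diagonal entries and zero row sums. -/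
def IsGenerator {S : Type*} [Fintype S] (L : Matrix S S ℝ) : Prop :=
  (∀ x y, x ≠ y → 0 ≤ L x y) ∧ ∀ x, ∑ y, L x y = 0

/-- A stochastic matrix: nonnegative entries and unit row sums. -/
def IsStochastic {S : Type*} [Fintype S] (K : Matrix S S ℝ) : Prop :=
  (∀ x y, 0 ≤ K x y) ∧ ∀ x, ∑ y, K x y = 1

/-- Irreducibility of a generator matrix: any two distinct states are connected by a path of
transitions with positive rate. -/
def GenIrreducible {S : Type*} [Fintype S] (L : Matrix S S ℝ) : Prop :=
  ∀ x y : S, x ≠ y → ∃ (m : ℕ) (f : Fin (m + 1) → S),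
    f 0 = x ∧ f (Fin.last m) = y ∧ ∀ i : Fin m, 0 < L (f i.castSucc) (f i.succ)

/-- Irreducibility of a stochastic matrix. -/
def MatIrreducible {S : Type*} [Fintype S] [DecidableEq S] (K : Matrix S S ℝ) : Prop :=
  ∀ x y : S, ∃ m : ℕ, 0 < (K ^ m) x y

/-- `μ` is a probability vector. -/
def IsProb {S : Type*} [Fintype S] (μ : S → ℝ) : Prop :=
  (∀ x, 0 ≤ μ x) ∧ ∑ x, μ x = 1

/-- Reversibility of the matrix `M` with respect to `π`. -/
def Reversible {S : Type*} [Fintype S] (M : Matrix S S ℝ) (π : S → ℝ) : Prop :=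
  ∀ x y, π x * M x y = π y * M y x

/-- `w i = |μ(φ_i)|²`, the squared `φ_i`-coefficient of the initial distribution `μ`. -/
noncomputable def wcoef {S : Type*} [Fintype S] (μ : S → ℝ) (φ : ℕ → S → ℝ) (i : ℕ) : ℝ :=
  (∑ x, μ x * φ i x) ^ 2

/-- `j(c) = min{ j ≥ 1 : ∑_{i=1}^j w i > c }` (indices below `card`). -/
noncomputable def jSpec (card : ℕ) (w : ℕ → ℝ) (c : ℝ) : ℕ :=
  sInf {j : ℕ | 1 ≤ j ∧ j < card ∧ c < ∑ i ∈ Finset.Icc 1 j, w i}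

/-- `τ(c) = max_{j(c) ≤ j < card} log(1 + ∑_{i=1}^j w i) / (2 λ_j)`. -/
noncomputable def tauSpec (card : ℕ) (w lam : ℕ → ℝ) (c : ℝ) : ℝ :=
  sSup ((fun j => Real.log (1 + ∑ i ∈ Finset.Icc 1 j, w i) / (2 * lam j)) ''
    {j : ℕ | jSpec card w c ≤ j ∧ j < card})

open scoped ENNReal

/-- A family of continuous-time chains with `L²`-distances `d n ·` has an `L²`-pre-cutoff:
for some positive `t_n` and `0 < A < B`, `d n (B t_n) → 0` and `liminf_n d n (A t_n) > 0`. -/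
def HasPreCutoffCT (d : ℕ → ℝ → ℝ) : Prop :=
  ∃ (t : ℕ → ℝ) (A B : ℝ), 0 < A ∧ A < B ∧ (∀ᶠ n in atTop, 0 < t n) ∧
    Tendsto (fun n => d n (B * t n)) atTop (𝓝 0) ∧
    0 < Filter.liminf (fun n => ENNReal.ofReal (d n (A * t n))) atTop

/-- A family of discrete-time chains with `L²`-distances `d n ·` has an `L²`-pre-cutoff:
for some positive `t_n` and `0 < A < B`, `d n ⌈B t_n⌉ → 0` and `liminf_n d n ⌊A t_n⌋ > 0`. -/
def HasPreCutoffDT (d : ℕ → ℕ → ℝ) : Prop :=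
  ∃ (t : ℕ → ℝ) (A B : ℝ), 0 < A ∧ A < B ∧ (∀ᶠ n in atTop, 0 < t n) ∧
    Tendsto (fun n => d n ⌈B * t n⌉₊) atTop (𝓝 0) ∧
    0 < Filter.liminf (fun n => ENNReal.ofReal (d n ⌊A * t n⌋₊)) atTop


/-!
Diagonalizing a reversible chain in `L²(π)` writes `d₂(μ,t)² = ∑ᵢ wᵢ e^{-λᵢ t}` with
`wᵢ, λᵢ ≥ 0` (in discrete time for `t = m ≥ 1`, with `e^{-λᵢ} = βᵢ²` for the eigenvalues `βᵢ`).
For such exponential mixtures `F_n` a pre-cutoff already is a cutoff: if `F_n(a_n) ≥ c`,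
`F_n(b_n) → 0` and `b_n ≤ R a_n`, let `s_n` be the time where `F_n` crosses `c`. Splitting the
modes at rate `K / s_n` gives `F_n((1+ε)s_n) ≤ e^{KR} F_n(b_n) + e^{-εK} c` and
`e^{εK} c ≤ F_n((1-ε)s_n) + e^{K(ε+R)} F_n(b_n)`; letting `n → ∞` and then `K → ∞` yields the
cutoff at `s_n`. In discrete time the mixing-time hypothesis forces the pre-cutoff times to
infinity, so rounding them to integers is harmless.
-/
def IsExpMixture (F : ℝ → ℝ) : Prop :=
  ∃ (ι : Type) (_ : Fintype ι) (w rate : ι → ℝ), (∀ i, 0 ≤ w i) ∧ (∀ i, 0 ≤ rate i) ∧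
    ∀ t, F t = ∑ i, w i * Real.exp (-(rate i * t))

namespace IsExpMixture

variable {F : ℝ → ℝ}

theorem nonneg (hF : IsExpMixture F) (t : ℝ) : 0 ≤ F t := by
  obtain ⟨ι, _, w, rate, hw, -, hF⟩ := hF
  rw [hF]
  exact Finset.sum_nonneg fun i _ => mul_nonneg (hw i) (Real.exp_nonneg _)

theorem continuous (hF : IsExpMixture F) : Continuous F := by
  obtain ⟨ι, _, w, rate, -, -, hF⟩ := hF
  rw [funext hF]
  fun_prop

theorem antitone (hF : IsExpMixture F) : Antitone F := by
  obtain ⟨ι, _, w, rate, hw, hrate, hF⟩ := hF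
  intro s t hst
  rw [hF, hF]
  gcongr with i
  · exact hw i
  · exact hrate i

theorem mul_le_mul_add_mul (hF : IsExpMixture F) {a b c x y z : ℝ}
    (h : ∀ r, 0 ≤ r → a * Real.exp (-(r * x)) ≤ b * Real.exp (-(r * y)) + c * Real.exp (-(r * z))) :
    a * F x ≤ b * F y + c * F z := by
  obtain ⟨ι, _, w, rate, hw, hrate, hF⟩ := hF
  simp only [hF, Finset.mul_sum, ← Finset.sum_add_distrib]
  refine Finset.sum_le_sum fun i _ => ?_
  have := mul_le_mul_of_nonneg_left (h (rate i) (hrate i)) (hw i)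
  linarith

/- The next two estimates split the modes at rate `θ`: slow modes are compared with the value
at `y`, fast ones gain the factor `exp (ε θ s)` between `s` and `(1 ± ε) s`. -/
theorem apply_one_add_mul_le (hF : IsExpMixture F) {θ ε s y : ℝ} (hε : 0 ≤ ε) (hs : 0 ≤ s)
    (hy : 0 ≤ y) :
    F ((1 + ε) * s) ≤ Real.exp (θ * y) * F y + Real.exp (-(ε * θ * s)) * F s := by
  simpa using hF.mul_le_mul_add_mul (a := 1) fun r hr => by
    rw [one_mul, ← Real.exp_add, ← Real.exp_add]
    rcases le_total r θ with hrθ | hθr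
    · refine le_add_of_le_of_nonneg (Real.exp_le_exp.2 ?_) (Real.exp_nonneg _)
      have hε' : 0 ≤ 1 + ε := by linarith
      nlinarith [mul_le_mul_of_nonneg_right hrθ hy, mul_nonneg hr (mul_nonneg hε' hs)]
    · refine le_add_of_nonneg_of_le (Real.exp_nonneg _) (Real.exp_le_exp.2 ?_)
      nlinarith [mul_le_mul_of_nonneg_right hθr (mul_nonneg hε hs)]

theorem exp_mul_le_apply_one_sub_mul_add (hF : IsExpMixture F) {θ ε s y : ℝ} (hε : 0 ≤ ε)
    (hs : 0 ≤ s) (hy : 0 ≤ y) :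
    Real.exp (ε * θ * s) * F s ≤ F ((1 - ε) * s) + Real.exp (θ * (ε * s + y)) * F y := by
  simpa using hF.mul_le_mul_add_mul (b := 1) fun r hr => by
    rw [one_mul, ← Real.exp_add, ← Real.exp_add]
    rcases le_total r θ with hrθ | hθr
    · refine le_add_of_nonneg_of_le (Real.exp_nonneg _) (Real.exp_le_exp.2 ?_)
      nlinarith [mul_le_mul_of_nonneg_right hrθ hy, mul_nonneg hr hs]
    · refine le_add_of_le_of_nonneg (Real.exp_le_exp.2 ?_) (Real.exp_nonneg _)
      nlinarith [mul_le_mul_of_nonneg_right hθr (mul_nonneg hε hs)]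

theorem exists_mem_Icc_apply_eq (hF : IsExpMixture F) {a b c : ℝ} (ha : c ≤ F a) (hb : F b < c) :
    ∃ x ∈ Icc a b, F x = c := by
  have hab : a ≤ b := le_of_not_gt fun hba => (hb.trans_le ha).not_ge (hF.antitone hba.le)
  exact intermediate_value_Icc' hab hF.continuous.continuousOn ⟨hb.le, ha⟩

end IsExpMixture

theorem exists_isExpMixture_eq_sum_pow {ι : Type} [Fintype ι] {w r : ι → ℝ} (hw : ∀ i, 0 ≤ w i)
    (hr0 : ∀ i, 0 ≤ r i) (hr1 : ∀ i, r i ≤ 1) :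
    ∃ F, IsExpMixture F ∧ ∀ m : ℕ, 1 ≤ m → ∑ i, w i * r i ^ m = F m := by
  classical
  refine ⟨fun t => ∑ i, (if r i = 0 then 0 else w i) * Real.exp (-(-Real.log (r i) * t)),
    ⟨ι, inferInstance, _, _, fun i => by split_ifs <;> simp [hw i],
      fun i => neg_nonneg.2 (Real.log_nonpos (hr0 i) (hr1 i)), fun t => rfl⟩,
    fun m hm => Finset.sum_congr rfl fun i _ => ?_⟩
  -- a zero ratio only contributes at `m = 0`
  split_ifs with h
  · simp [h, zero_pow (by omega : m ≠ 0)]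
  · rw [neg_mul, neg_neg, ← Real.rpow_def_of_pos ((hr0 i).lt_of_ne' h), Real.rpow_natCast]

section Cutoff

variable {F : ℕ → ℝ → ℝ} {s b : ℕ → ℝ} {c R ε : ℝ}

theorem tendsto_apply_one_add_mul_nhds_zero (hF : ∀ n, IsExpMixture (F n)) (hε : 0 < ε)
    (hs : ∀ᶠ n in atTop, 0 < s n ∧ 0 ≤ b n ∧ b n ≤ R * s n ∧ F n (s n) ≤ c)
    (hb : Tendsto (fun n => F n (b n)) atTop (𝓝 0)) :
    Tendsto (fun n => F n ((1 + ε) * s n)) atTop (𝓝 0) := by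
  refine tendsto_order.2 ⟨fun δ hδ => Eventually.of_forall fun n => hδ.trans_le ((hF n).nonneg _),
    fun δ hδ => ?_⟩
  obtain ⟨K, hK0, hK⟩ : ∃ K, 0 ≤ K ∧ Real.exp (-(ε * K)) * c < δ / 2 := by
    have : Tendsto (fun K => Real.exp (-(ε * K)) * c) atTop (𝓝 0) := by
      simpa using (Real.tendsto_exp_neg_atTop_nhds_zero.comp
        (tendsto_id.const_mul_atTop hε)).mul_const c
    exact ((eventually_ge_atTop 0).and (this.eventually (gt_mem_nhds (half_pos hδ)))).exists
  have hbK : ∀ᶠ n in atTop, Real.exp (K * R) * F n (b n) < δ / 2 := by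
    simpa using (hb.const_mul (Real.exp (K * R))).eventually
      (gt_mem_nhds (by simpa using half_pos hδ))
  filter_upwards [hs, hbK] with n ⟨hsn, hbn, hbR, hFs⟩ hbK
  have hθb : K / s n * b n ≤ K * R := by
    rw [div_mul_eq_mul_div, div_le_iff₀ hsn]
    nlinarith
  have hθs : ε * (K / s n) * s n = ε * K := by field_simp
  calc F n ((1 + ε) * s n)
      ≤ Real.exp (K / s n * b n) * F n (b n) + Real.exp (-(ε * (K / s n) * s n)) * F n (s n) :=
        (hF n).apply_one_add_mul_le hε.le hsn.le hbn
    _ ≤ Real.exp (K * R) * F n (b n) + Real.exp (-(ε * K)) * c := by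
        rw [hθs]
        gcongr
        exact (hF n).nonneg _
    _ < δ := by linarith

theorem tendsto_apply_one_sub_mul_atTop (hF : ∀ n, IsExpMixture (F n)) (hε : 0 < ε) (hc : 0 < c)
    (hs : ∀ᶠ n in atTop, 0 < s n ∧ 0 ≤ b n ∧ b n ≤ R * s n ∧ c ≤ F n (s n))
    (hb : Tendsto (fun n => F n (b n)) atTop (𝓝 0)) :
    Tendsto (fun n => F n ((1 - ε) * s n)) atTop atTop := by
  refine tendsto_atTop.2 fun M => ?_
  obtain ⟨K, hK0, hK⟩ : ∃ K, 0 ≤ K ∧ M + 1 ≤ Real.exp (ε * K) * c := by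
    have : Tendsto (fun K => Real.exp (ε * K) * c) atTop atTop :=
      (Real.tendsto_exp_atTop.comp (tendsto_id.const_mul_atTop hε)).atTop_mul_const hc
    exact ((eventually_ge_atTop 0).and (this.eventually_ge_atTop (M + 1))).exists
  have hbK : ∀ᶠ n in atTop, Real.exp (K * (ε + R)) * F n (b n) < 1 := by
    simpa using (hb.const_mul (Real.exp (K * (ε + R)))).eventually (gt_mem_nhds (by simp))
  filter_upwards [hs, hbK] with n ⟨hsn, hbn, hbR, hFs⟩ hbK
  have hθs : ε * (K / s n) * s n = ε * K := by field_simp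
  have hθb : K / s n * (ε * s n + b n) ≤ K * (ε + R) := by
    rw [div_mul_eq_mul_div, div_le_iff₀ hsn]
    nlinarith
  calc M ≤ Real.exp (ε * K) * F n (s n) - Real.exp (K * (ε + R)) * F n (b n) := by
        nlinarith [Real.exp_pos (ε * K)]
    _ ≤ Real.exp (ε * (K / s n) * s n) * F n (s n)
          - Real.exp (K / s n * (ε * s n + b n)) * F n (b n) := by
        rw [hθs]
        gcongr
        exact (hF n).nonneg _
    _ ≤ F n ((1 - ε) * s n) := by
        linarith [(hF n).exp_mul_le_apply_one_sub_mul_add (θ := K / s n) hε.le hsn.le hbn]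

/-- The cutoff time is the time at which `F n` crosses the level `c`. -/
theorem exists_isCutoffTimeCT_of_isExpMixture (hF : ∀ n, IsExpMixture (F n)) {a : ℕ → ℝ}
    (hc : 0 < c) (ha : ∀ᶠ n in atTop, 0 < a n) (hbR : ∀ᶠ n in atTop, b n ≤ R * a n)
    (hFa : ∀ᶠ n in atTop, c ≤ F n (a n)) (hFb : Tendsto (fun n => F n (b n)) atTop (𝓝 0)) :
    ∃ s : ℕ → ℝ, (∀ᶠ n in atTop, a n ≤ s n) ∧ IsCutoffTimeCT F s := by
  have hcross : ∀ n, ∃ x, c ≤ F n (a n) → F n (b n) < c → x ∈ Icc (a n) (b n) ∧ F n x = c := by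
    intro n
    by_cases h : c ≤ F n (a n) ∧ F n (b n) < c
    · obtain ⟨x, hx, hFx⟩ := (hF n).exists_mem_Icc_apply_eq h.1 h.2
      exact ⟨x, fun _ _ => ⟨hx, hFx⟩⟩
    · exact ⟨0, fun h₁ h₂ => absurd ⟨h₁, h₂⟩ h⟩
  choose s hs using hcross
  have hwin : ∀ᶠ n in atTop, a n ≤ s n ∧ 0 < s n ∧ 0 ≤ b n ∧ b n ≤ R * s n ∧ F n (s n) = c := by
    filter_upwards [ha, hbR, hFa, hFb.eventually (gt_mem_nhds hc)] with n ha hbR hFa hFb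
    obtain ⟨⟨has, hsb⟩, hFs⟩ := hs n hFa hFb
    exact ⟨has, ha.trans_le has, by linarith, by nlinarith, hFs⟩
  refine ⟨s, hwin.mono fun n h => h.1, hwin.mono fun n h => h.2.1, fun ε hε => ⟨?_, ?_⟩⟩
  · exact tendsto_apply_one_add_mul_nhds_zero hF hε.1
      (hwin.mono fun n h => ⟨h.2.1, h.2.2.1, h.2.2.2.1, h.2.2.2.2.le⟩) hFb
  · exact tendsto_apply_one_sub_mul_atTop hF hε.1 hc
      (hwin.mono fun n h => ⟨h.2.1, h.2.2.1, h.2.2.2.1, h.2.2.2.2.ge⟩) hFb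

end Cutoff

theorem IsCutoffTimeCT.sqrt {F : ℕ → ℝ → ℝ} {s : ℕ → ℝ} (h : IsCutoffTimeCT F s) :
    IsCutoffTimeCT (fun n t => √(F n t)) s :=
  ⟨h.1, fun a ha => ⟨by simpa using (h.2 a ha).1.sqrt,
    Real.tendsto_sqrt_atTop.comp (h.2 a ha).2⟩⟩

theorem IsCutoffTimeCT.isCutoffTimeDT {G : ℕ → ℝ → ℝ} {d : ℕ → ℕ → ℝ} {s : ℕ → ℝ}
    (h : IsCutoffTimeCT G s) (hG0 : ∀ n t, 0 ≤ G n t) (hG : ∀ n, Antitone (G n))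
    (hs : Tendsto s atTop atTop) (hd : ∀ n m, 1 ≤ m → d n m = G n m) :
    IsCutoffTimeDT d s := by
  refine ⟨h.1, fun a ha => ⟨?_, ?_⟩⟩
  · have hceil : ∀ᶠ n in atTop, d n ⌈(1 + a) * s n⌉₊ = G n ⌈(1 + a) * s n⌉₊ := by
      filter_upwards [h.1] with n hn
      exact hd n _ (Nat.one_le_ceil_iff.2 (mul_pos (by linarith [ha.1]) hn))
    refine squeeze_zero' (hceil.mono fun n hn => hn ▸ hG0 _ _) ?_ (h.2 a ha).1
    exact hceil.mono fun n hn => hn ▸ hG n (Nat.le_ceil _)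
  · have hlarge : Tendsto (fun n => (1 - a) * s n) atTop atTop :=
      hs.const_mul_atTop (by linarith [ha.2])
    refine tendsto_atTop_mono' atTop ?_ (h.2 a ha).2
    filter_upwards [hlarge.eventually_ge_atTop 1] with n hn
    rw [hd n _ (Nat.one_le_floor_iff _ |>.2 hn)]
    exact hG n (Nat.floor_le (by linarith))

theorem exists_pos_eventually_le_of_liminf_ofReal_pos {f : ℕ → ℝ}
    (h : 0 < liminf (fun n => ENNReal.ofReal (f n)) atTop) :
    ∃ c > 0, ∀ᶠ n in atTop, c ≤ f n := by
  obtain ⟨c, hc0, hc⟩ := exists_between h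
  have hctop : c ≠ ⊤ := (hc.trans_le le_top).ne
  refine ⟨c.toReal, ENNReal.toReal_pos hc0.ne' hctop, ?_⟩
  filter_upwards [eventually_lt_of_lt_liminf hc] with n hn
  exact ((ENNReal.lt_ofReal_iff_toReal_lt hctop).1 hn).le

theorem liminf_ofReal_pos_of_tendsto_atTop {f : ℕ → ℝ} (h : Tendsto f atTop atTop) :
    0 < liminf (fun n => ENNReal.ofReal (f n)) atTop := by
  have : Tendsto (fun n => ENNReal.ofReal (f n)) atTop (𝓝 ⊤) := ENNReal.tendsto_ofReal_atTop.comp h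
  rw [this.liminf_eq]
  exact ENNReal.zero_lt_top

theorem HasCutoffCT.hasPreCutoffCT {d : ℕ → ℝ → ℝ} : HasCutoffCT d → HasPreCutoffCT d := by
  rintro ⟨t, ht, hcut⟩
  obtain ⟨hfast, hslow⟩ := hcut (1 / 2) (by norm_num)
  exact ⟨t, 1 - 1 / 2, 1 + 1 / 2, by norm_num, by norm_num, ht, hfast,
    liminf_ofReal_pos_of_tendsto_atTop hslow⟩

theorem HasCutoffDT.hasPreCutoffDT {d : ℕ → ℕ → ℝ} : HasCutoffDT d → HasPreCutoffDT d := by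
  rintro ⟨t, ht, hcut⟩
  obtain ⟨hfast, hslow⟩ := hcut (1 / 2) (by norm_num)
  exact ⟨t, 1 - 1 / 2, 1 + 1 / 2, by norm_num, by norm_num, ht, hfast,
    liminf_ofReal_pos_of_tendsto_atTop hslow⟩

section PreCutoff

variable {F : ℕ → ℝ → ℝ}

theorem tendsto_nhds_zero_of_sqrt {f : ℕ → ℝ} (hf : ∀ n, 0 ≤ f n)
    (h : Tendsto (fun n => √(f n)) atTop (𝓝 0)) : Tendsto f atTop (𝓝 0) := by
  simpa [Real.sq_sqrt (hf _)] using h.pow 2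

theorem hasCutoffCT_sqrt_iff_hasPreCutoffCT (hF : ∀ n, IsExpMixture (F n)) :
    HasCutoffCT (fun n t => √(F n t)) ↔ HasPreCutoffCT (fun n t => √(F n t)) := by
  refine ⟨HasCutoffCT.hasPreCutoffCT, ?_⟩
  rintro ⟨t, A, B, hA, hAB, ht, hB, hAlim⟩
  obtain ⟨c, hc, hcA⟩ := exists_pos_eventually_le_of_liminf_ofReal_pos hAlim
  obtain ⟨s, -, hs⟩ := exists_isCutoffTimeCT_of_isExpMixture hF (pow_pos hc 2)
    (a := fun n => A * t n) (R := B / A) (ht.mono fun n hn => mul_pos hA hn)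
    (Eventually.of_forall fun n => by field_simp; rfl)
    (hcA.mono fun n hn => (Real.le_sqrt' hc).1 hn)
    (tendsto_nhds_zero_of_sqrt (fun n => (hF n).nonneg _) hB)
  exact ⟨s, hs.sqrt⟩

theorem tendsto_atTop_of_mixingTime_tendsto_atTop {d : ℕ → ℕ → ℝ} {ε₀ : ℝ} {m : ℕ → ℕ}
    (hε₀ : 0 < ε₀)
    (hT : Tendsto (fun n => ((sInf {k : ℕ | d n k ≤ ε₀} : ℕ) : ℝ)) atTop atTop)
    (hm : Tendsto (fun n => d n (m n)) atTop (𝓝 0)) :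
    Tendsto (fun n => (m n : ℝ)) atTop atTop :=
  tendsto_atTop_mono' _ ((hm.eventually (gt_mem_nhds hε₀)).mono fun _ hn =>
    Nat.cast_le.2 (Nat.sInf_le hn.le)) hT

theorem natCeil_le_mul_natFloor {A B x : ℝ} (hA : 0 < A) (hAx : 2 ≤ A * x) (hBx : 1 ≤ B * x) :
    (⌈B * x⌉₊ : ℝ) ≤ 4 * B / A * ⌊A * x⌋₊ := by
  have hceil := Nat.ceil_lt_add_one (by linarith : 0 ≤ B * x)
  have hfloor := Nat.sub_one_lt_floor (A * x)
  have hB : 0 < B := by nlinarith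
  rw [div_mul_eq_mul_div, le_div_iff₀ hA]
  nlinarith [mul_lt_mul_of_pos_left hfloor hB, mul_lt_mul_of_pos_right hceil hA,
    mul_le_mul_of_nonneg_right hAx hB.le, mul_le_mul_of_nonneg_right hBx hA.le]

theorem hasCutoffDT_iff_hasPreCutoffDT_of_eq_sqrt (hF : ∀ n, IsExpMixture (F n))
    {d : ℕ → ℕ → ℝ} (hd : ∀ n m, 1 ≤ m → d n m = √(F n m)) {ε₀ : ℝ} (hε₀ : 0 < ε₀)
    (hT : Tendsto (fun n => ((sInf {m : ℕ | d n m ≤ ε₀} : ℕ) : ℝ)) atTop atTop) :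
    HasCutoffDT d ↔ HasPreCutoffDT d := by
  refine ⟨HasCutoffDT.hasPreCutoffDT, ?_⟩
  rintro ⟨t, A, B, hA, hAB, ht, hB, hAlim⟩
  have hBpos : 0 < B := hA.trans hAB
  have htop : Tendsto t atTop atTop := by
    have hceil := tendsto_atTop_add_const_right _ (-1)
      (tendsto_atTop_of_mixingTime_tendsto_atTop hε₀ hT hB)
    have hBt : Tendsto (fun n => B * t n) atTop atTop := by
      refine tendsto_atTop_mono' _ ?_ hceil
      filter_upwards [ht] with n hn
      linarith [Nat.ceil_lt_add_one (mul_pos hBpos hn).le]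
    exact (hBt.atTop_div_const hBpos).congr fun n => by field_simp
  have hlarge : ∀ᶠ n in atTop, 2 ≤ A * t n ∧ 1 ≤ B * t n :=
    ((htop.const_mul_atTop hA).eventually_ge_atTop 2).and
      ((htop.const_mul_atTop hBpos).eventually_ge_atTop 1)
  have hd' : ∀ᶠ n in atTop, d n ⌊A * t n⌋₊ = √(F n ⌊A * t n⌋₊) ∧
      d n ⌈B * t n⌉₊ = √(F n ⌈B * t n⌉₊) := hlarge.mono fun n hn =>
    ⟨hd n _ (Nat.one_le_floor_iff _ |>.2 (by linarith)),
      hd n _ (Nat.one_le_ceil_iff.2 (by linarith))⟩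
  obtain ⟨c, hc, hcA⟩ := exists_pos_eventually_le_of_liminf_ofReal_pos hAlim
  obtain ⟨s, has, hs⟩ := exists_isCutoffTimeCT_of_isExpMixture hF (pow_pos hc 2)
    (a := fun n => (⌊A * t n⌋₊ : ℝ)) (b := fun n => (⌈B * t n⌉₊ : ℝ)) (R := 4 * B / A)
    (hlarge.mono fun n hn => by simp only [Nat.cast_pos, Nat.floor_pos]; linarith)
    (hlarge.mono fun n hn => natCeil_le_mul_natFloor hA hn.1 hn.2)
    (by
      filter_upwards [hcA, hd'] with n hn hdn
      exact (Real.le_sqrt' hc).1 (hdn.1 ▸ hn))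
    (tendsto_nhds_zero_of_sqrt (fun n => (hF n).nonneg _)
      (hB.congr' (hd'.mono fun n hn => hn.2)))
  have hstop : Tendsto s atTop atTop := tendsto_atTop_mono' _ has
    (tendsto_natCast_atTop_atTop.comp (tendsto_nat_floor_atTop.comp (htop.const_mul_atTop hA)))
  exact ⟨s, hs.sqrt.isCutoffTimeDT (fun _ _ => Real.sqrt_nonneg _)
    (fun n _ _ hxy => Real.sqrt_le_sqrt ((hF n).antitone hxy)) hstop hd⟩

end PreCutoff

open Matrix

section QuadraticForm

variable {S : Type} [Fintype S] {M : Matrix S S ℝ} {π : S → ℝ} {κ : ℝ}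

theorem Reversible.vecMul_eq_smul (hM : Reversible M π) (hrow : ∀ x, ∑ y, M x y = κ) :
    π ᵥ* M = κ • π := by
  ext y
  simp only [vecMul, dotProduct, Pi.smul_apply, smul_eq_mul, hM _ y]
  rw [← Finset.mul_sum, hrow, mul_comm]

theorem Reversible.sum_sum_mul_add_mul_sq (hM : Reversible M π) (hrow : ∀ x, ∑ y, M x y = κ)
    (v : S → ℝ) (σ : ℝ) :
    ∑ x, ∑ y, π x * M x y * (v x + σ * v y) ^ 2 =
      (1 + σ ^ 2) * κ * ∑ x, π x * v x ^ 2 + 2 * σ * ∑ x, ∑ y, π x * M x y * (v x * v y) := by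
  have hleft : ∑ x, ∑ y, π x * M x y * v x ^ 2 = κ * ∑ x, π x * v x ^ 2 := by
    simp only [Finset.mul_sum]
    refine Finset.sum_congr rfl fun x _ => ?_
    simp only [mul_assoc (π x), ← Finset.sum_mul, ← Finset.mul_sum, hrow]
    ring
  have hright : ∑ x, ∑ y, π x * M x y * v y ^ 2 = κ * ∑ x, π x * v x ^ 2 := by
    rw [Finset.sum_comm, ← hleft]
    exact Finset.sum_congr rfl fun y _ => Finset.sum_congr rfl fun x _ => by rw [hM x y]
  calc ∑ x, ∑ y, π x * M x y * (v x + σ * v y) ^ 2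
      = ∑ x, ∑ y, π x * M x y * v x ^ 2 + σ ^ 2 * ∑ x, ∑ y, π x * M x y * v y ^ 2
          + 2 * σ * ∑ x, ∑ y, π x * M x y * (v x * v y) := by
        simp only [Finset.mul_sum, ← Finset.sum_add_distrib]
        exact Finset.sum_congr rfl fun x _ => Finset.sum_congr rfl fun y _ => by ring
    _ = _ := by rw [hleft, hright]; ring

theorem IsGenerator.sum_sum_mul_mul_nonpos (hL : IsGenerator M) (hπ : ∀ x, 0 ≤ π x)
    (hM : Reversible M π) (v : S → ℝ) :
    ∑ x, ∑ y, π x * M x y * (v x * v y) ≤ 0 := by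
  have h := hM.sum_sum_mul_add_mul_sq hL.2 v (-1)
  have hnonneg : 0 ≤ ∑ x, ∑ y, π x * M x y * (v x + -1 * v y) ^ 2 := by
    refine Finset.sum_nonneg fun x _ => Finset.sum_nonneg fun y _ => ?_
    rcases eq_or_ne x y with rfl | hxy
    · simp
    · exact mul_nonneg (mul_nonneg (hπ x) (hL.1 x y hxy)) (sq_nonneg _)
  linarith

theorem IsStochastic.abs_sum_sum_mul_mul_le (hK : IsStochastic M) (hπ : ∀ x, 0 ≤ π x)
    (hM : Reversible M π) (v : S → ℝ) :
    |∑ x, ∑ y, π x * M x y * (v x * v y)| ≤ ∑ x, π x * v x ^ 2 := by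
  have hnonneg : ∀ σ : ℝ, 0 ≤ ∑ x, ∑ y, π x * M x y * (v x + σ * v y) ^ 2 := fun σ =>
    Finset.sum_nonneg fun x _ => Finset.sum_nonneg fun y _ =>
      mul_nonneg (mul_nonneg (hπ x) (hK.1 x y)) (sq_nonneg _)
  have hplus := hM.sum_sum_mul_add_mul_sq hK.2 v 1
  have hminus := hM.sum_sum_mul_add_mul_sq hK.2 v (-1)
  rw [abs_le]
  constructor <;> nlinarith [hnonneg 1, hnonneg (-1)]

end QuadraticForm

section Spectral

variable {S : Type} [Fintype S] [DecidableEq S]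

noncomputable def chiSq (P : Matrix S S ℝ) (μ π : S → ℝ) : ℝ :=
  ∑ y, ((∑ x, μ x * P x y) / π y - 1) ^ 2 * π y

/- `Uᵀ * diagonal π * U = 1` says that the columns of `U` are orthonormal in `L²(π)`, so that
`Uᵀ * diagonal π` inverts `U`; the next identity is then Parseval's. -/
theorem chiSq_conj_diagonal {π : S → ℝ} (hπ : ∀ x, 0 < π x) {U : Matrix S S ℝ}
    (hU : Uᵀ * diagonal π * U = 1) (μ e : S → ℝ) :
    chiSq (U * diagonal e * (Uᵀ * diagonal π)) μ π =
      ∑ i, ((μ ᵥ* U) i * e i - (π ᵥ* U) i) ^ 2 := by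
  set r : S → ℝ := fun i => (μ ᵥ* U) i * e i - (π ᵥ* U) i
  have hU' : U * (Uᵀ * diagonal π) = 1 := mul_eq_one_comm.1 hU
  have hone : U *ᵥ (π ᵥ* U) = 1 := by
    have hπ1 : π = diagonal π *ᵥ 1 := by ext; simp [mulVec_diagonal]
    conv_lhs => rw [← mulVec_transpose, mulVec_mulVec, hπ1, mulVec_mulVec, Matrix.mul_assoc, hU']
    exact one_mulVec 1
  have hrow : μ ᵥ* (U * diagonal e * (Uᵀ * diagonal π)) = (U *ᵥ r + 1) * π := by
    have hr : (μ ᵥ* U) * e = r + π ᵥ* U := by ext; simp [r]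
    have hdiag : ∀ v w : S → ℝ, v ᵥ* diagonal w = v * w := fun v w => funext (vecMul_diagonal v w)
    rw [← vecMul_vecMul, ← vecMul_vecMul, ← vecMul_vecMul, hdiag, hdiag, vecMul_transpose, hr,
      mulVec_add, hone]
  have hsq : ∑ y, (U *ᵥ r) y ^ 2 * π y = ∑ i, r i ^ 2 := by
    calc ∑ y, (U *ᵥ r) y ^ 2 * π y = (U *ᵥ r) ⬝ᵥ ((diagonal π * U) *ᵥ r) := by
          simp only [dotProduct, ← mulVec_mulVec, mulVec_diagonal]
          exact Finset.sum_congr rfl fun y _ => by ring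
      _ = r ⬝ᵥ r := by
          rw [dotProduct_mulVec, ← vecMul_transpose, vecMul_vecMul, ← Matrix.mul_assoc, hU,
            vecMul_one]
      _ = ∑ i, r i ^ 2 := by simp [dotProduct, sq]
  rw [chiSq, ← hsq]
  refine Finset.sum_congr rfl fun y _ => ?_
  have := congrFun hrow y
  simp only [vecMul, dotProduct, Pi.mul_apply, Pi.add_apply, Pi.one_apply] at this
  rw [this]
  field_simp [(hπ y).ne']
  ring

theorem Reversible.exists_orthonormal_diagonalization {M : Matrix S S ℝ} {π : S → ℝ}
    (hπ : ∀ x, 0 < π x) (hM : Reversible M π) :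
    ∃ (U : Matrix S S ℝ) (β : S → ℝ),
      Uᵀ * diagonal π * U = 1 ∧ M = U * diagonal β * (Uᵀ * diagonal π) := by
  set g : S → ℝ := fun x => √(π x)
  have hg : ∀ x, g x ≠ 0 := fun x => (Real.sqrt_pos.2 (hπ x)).ne'
  have hgg : ∀ x, g x * g x = π x := fun x => Real.mul_self_sqrt (hπ x).le
  have hg_inv : diagonal g * diagonal g⁻¹ = 1 := by
    rw [diagonal_mul_diagonal, ← diagonal_one]; congr; ext x; simp [hg x]
  have hinv_g : diagonal g⁻¹ * diagonal g = 1 := by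
    rw [diagonal_mul_diagonal, ← diagonal_one]; congr; ext x; simp [hg x]
  have hinv_π : diagonal g⁻¹ * diagonal π = diagonal g := by
    rw [diagonal_mul_diagonal]; congr; ext x; simp [← hgg x, hg x]
  -- the symmetrization `D M D⁻¹` with `D = diag √π` is symmetric by reversibility
  set N := diagonal g * M * diagonal g⁻¹
  have hN : N.IsHermitian := by
    ext x y
    have := hM y x
    simp only [N, conjTranspose_apply, star_trivial, mul_diagonal, diagonal_mul, Pi.inv_apply]
    rw [← hgg x, ← hgg y] at this
    field_simp [hg x, hg y]
    linear_combination this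
  set V : Matrix S S ℝ := (hN.eigenvectorUnitary : Matrix S S ℝ)
  have hVt : star V = Vᵀ := by rw [star_eq_conjTranspose, conjTranspose_eq_transpose_of_trivial]
  have hVV : Vᵀ * V = 1 := hVt ▸ Unitary.coe_star_mul_self hN.eigenvectorUnitary
  obtain ⟨β, hNV⟩ : ∃ β : S → ℝ, N = V * diagonal β * Vᵀ := by
    have h := hN.spectral_theorem
    rw [Unitary.conjStarAlgAut_apply] at h
    exact ⟨hN.eigenvalues, by simpa [← hVt] using h⟩
  refine ⟨diagonal g⁻¹ * V, β, ?_, ?_⟩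
  · rw [transpose_mul, diagonal_transpose, Matrix.mul_assoc Vᵀ, hinv_π, Matrix.mul_assoc,
      ← Matrix.mul_assoc (diagonal g), hg_inv, Matrix.one_mul, hVV]
  · rw [transpose_mul, diagonal_transpose, Matrix.mul_assoc Vᵀ, hinv_π]
    calc M = diagonal g⁻¹ * N * diagonal g := by
          simp only [N, ← Matrix.mul_assoc]
          rw [hinv_g, Matrix.one_mul, Matrix.mul_assoc, hinv_g, Matrix.mul_one]
      _ = _ := by rw [hNV]; simp only [Matrix.mul_assoc]

section OrthonormalConj

variable {π : S → ℝ} {U : Matrix S S ℝ}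

noncomputable def orthonormalUnit (hU : Uᵀ * diagonal π * U = 1) : (Matrix S S ℝ)ˣ :=
  ⟨U, Uᵀ * diagonal π, mul_eq_one_comm.1 hU, hU⟩

theorem conj_diagonal_pow (hU : Uᵀ * diagonal π * U = 1) (β : S → ℝ) (m : ℕ) :
    (U * diagonal β * (Uᵀ * diagonal π)) ^ m = U * diagonal (β ^ m) * (Uᵀ * diagonal π) := by
  rw [← diagonal_pow]
  exact Units.conj_pow (orthonormalUnit hU) _ m

theorem exp_smul_conj_diagonal (hU : Uᵀ * diagonal π * U = 1) (β : S → ℝ) (t : ℝ) :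
    NormedSpace.exp (t • (U * diagonal β * (Uᵀ * diagonal π))) =
      U * diagonal (fun i => Real.exp (t * β i)) * (Uᵀ * diagonal π) := by
  have h := Matrix.exp_units_conj (orthonormalUnit hU) (diagonal (t • β))
  rw [diagonal_smul, mul_smul_comm, smul_mul_assoc, ← diagonal_smul, exp_diagonal] at h
  refine h.trans ?_
  congr
  ext i
  simp [Real.exp_eq_exp_ℝ]

variable {M : Matrix S S ℝ} {β : S → ℝ}

theorem mul_eq_mul_diagonal (hU : Uᵀ * diagonal π * U = 1)
    (hM : M = U * diagonal β * (Uᵀ * diagonal π)) : M * U = U * diagonal β := by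
  rw [hM, Matrix.mul_assoc, hU, Matrix.mul_one]

theorem eigenvalue_eq_sum_sum (hU : Uᵀ * diagonal π * U = 1)
    (hM : M = U * diagonal β * (Uᵀ * diagonal π)) (i : S) :
    β i = ∑ x, ∑ y, π x * M x y * (U x i * U y i) := by
  have hdiag : Uᵀ * diagonal π * (M * U) = diagonal β := by
    rw [mul_eq_mul_diagonal hU hM, ← Matrix.mul_assoc, hU, Matrix.one_mul]
  have := congrFun₂ hdiag i i
  simp only [Matrix.mul_apply, transpose_apply, diagonal_apply, mul_ite, mul_zero,
    Finset.sum_ite_eq', Finset.mem_univ, if_true, Finset.mul_sum] at this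
  rw [← this]
  exact Finset.sum_congr rfl fun x _ => Finset.sum_congr rfl fun y _ => by ring

theorem sum_mul_sq_eq_one (hU : Uᵀ * diagonal π * U = 1) (i : S) :
    ∑ x, π x * U x i ^ 2 = 1 := by
  have := congrFun₂ hU i i
  simp only [Matrix.mul_apply, transpose_apply, diagonal_apply, mul_ite, mul_zero,
    Finset.sum_ite_eq', Finset.mem_univ, if_true, one_apply_eq] at this
  rw [← this]
  exact Finset.sum_congr rfl fun x _ => by ring

theorem vecMul_mul_eigenvalue (hU : Uᵀ * diagonal π * U = 1)
    (hM : M = U * diagonal β * (Uᵀ * diagonal π)) {κ : ℝ} (hπM : π ᵥ* M = κ • π) (i : S) :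
    (π ᵥ* U) i * β i = κ * (π ᵥ* U) i := by
  have := congrFun (congrArg (π ᵥ* ·) (mul_eq_mul_diagonal hU hM)) i
  simp only [← vecMul_vecMul, hπM, vecMul_diagonal, smul_vecMul, Pi.smul_apply, smul_eq_mul]
    at this
  exact this.symm

end OrthonormalConj

theorem IsGenerator.exists_isExpMixture_d2ct {L : Matrix S S ℝ} {π : S → ℝ} (hL : IsGenerator L)
    (hπ : ∀ x, 0 < π x) (hrev : Reversible L π) (μ : S → ℝ) :
    ∃ F, IsExpMixture F ∧ ∀ t, d2ct L μ π t = √(F t) := by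
  obtain ⟨U, β, hU, hLU⟩ := hrev.exists_orthonormal_diagonalization hπ
  have hβ : ∀ i, β i ≤ 0 := fun i => by
    rw [eigenvalue_eq_sum_sum hU hLU i]
    exact hL.sum_sum_mul_mul_nonpos (fun x => (hπ x).le) hrev _
  have hc : ∀ i, (π ᵥ* U) i * β i = 0 := fun i => by
    simpa using vecMul_mul_eigenvalue hU hLU (hrev.vecMul_eq_smul hL.2) i
  refine ⟨fun t => ∑ i, ((μ ᵥ* U) i - (π ᵥ* U) i) ^ 2 * Real.exp (-(-(2 * β i) * t)),
    ⟨S, inferInstance, _, _, fun i => sq_nonneg _, fun i => by linarith [hβ i], fun t => rfl⟩,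
    fun t => ?_⟩
  change √(chiSq (NormedSpace.exp (t • L)) μ π) = _
  rw [hLU, exp_smul_conj_diagonal hU, chiSq_conj_diagonal hπ hU]
  refine congrArg _ (Finset.sum_congr rfl fun i _ => ?_)
  rcases mul_eq_zero.1 (hc i) with h | h
  · rw [h, sub_zero, sub_zero, mul_pow, ← Real.exp_nat_mul]
    ring_nf
  · simp [h]

theorem IsStochastic.exists_isExpMixture_d2dt {K : Matrix S S ℝ} {π : S → ℝ}
    (hK : IsStochastic K) (hπ : ∀ x, 0 < π x) (hrev : Reversible K π) (μ : S → ℝ) :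
    ∃ F, IsExpMixture F ∧ ∀ m : ℕ, 1 ≤ m → d2dt K μ π m = √(F m) := by
  obtain ⟨U, β, hU, hKU⟩ := hrev.exists_orthonormal_diagonalization hπ
  have hβ : ∀ i, |β i| ≤ 1 := fun i => by
    have := hK.abs_sum_sum_mul_mul_le (fun x => (hπ x).le) hrev (fun x => U x i)
    rwa [← eigenvalue_eq_sum_sum hU hKU i, sum_mul_sq_eq_one hU i] at this
  have hc : ∀ i, (π ᵥ* U) i = 0 ∨ β i = 1 := fun i => by
    have := vecMul_mul_eigenvalue hU hKU (hrev.vecMul_eq_smul hK.2) i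
    rcases eq_or_ne ((π ᵥ* U) i) 0 with h | h
    · exact .inl h
    · exact .inr (mul_left_cancel₀ h (by linarith))
  obtain ⟨F, hF, hFeq⟩ := exists_isExpMixture_eq_sum_pow
    (w := fun i => ((μ ᵥ* U) i - (π ᵥ* U) i) ^ 2) (r := fun i => β i ^ 2)
    (fun i => sq_nonneg _) (fun i => sq_nonneg _) (fun i => (sq_le_one_iff_abs_le_one _).2 (hβ i))
  refine ⟨F, hF, fun m hm => ?_⟩
  change √(chiSq (K ^ m) μ π) = _
  rw [← hFeq m hm, hKU, conj_diagonal_pow hU, chiSq_conj_diagonal hπ hU]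
  refine congrArg _ (Finset.sum_congr rfl fun i _ => ?_)
  rcases hc i with h | h
  · rw [h, Pi.pow_apply]
    ring
  · simp [h]

end Spectral

theorem stmt_11_general
    -- Part (1): a family of irreducible reversible continuous-time chains
    (S : ℕ → Type) [∀ n, Fintype (S n)] [∀ n, DecidableEq (S n)]
    (L : ∀ n, Matrix (S n) (S n) ℝ) (μ π : ∀ n, S n → ℝ)
    (hgen : ∀ n, IsGenerator (L n)) (hπpos : ∀ n x, 0 < π n x)
    (hrev : ∀ n, Reversible (L n) (π n))
    -- Part (2): a family of irreducible reversible discrete-time chains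
    (S' : ℕ → Type) [∀ n, Fintype (S' n)] [∀ n, DecidableEq (S' n)]
    (K : ∀ n, Matrix (S' n) (S' n) ℝ) (μ' π' : ∀ n, S' n → ℝ)
    (hK : ∀ n, IsStochastic (K n)) (hπ'pos : ∀ n x, 0 < π' n x)
    (hrev' : ∀ n, Reversible (K n) (π' n))
    -- `T_{n,2}(μ_n,ε₀) → ∞` for some `ε₀ ∈ (0,∞)`
    (hmix' : ∃ ε₀ > (0 : ℝ),
      Tendsto (fun n => (Tmix2dt (K n) (μ' n) (π' n) ε₀ : ℝ)) atTop atTop) :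
    (HasCutoffCT (fun n t => d2ct (L n) (μ n) (π n) t) ↔
      HasPreCutoffCT (fun n t => d2ct (L n) (μ n) (π n) t)) ∧
    (HasCutoffDT (fun n m => d2dt (K n) (μ' n) (π' n) m) ↔
      HasPreCutoffDT (fun n m => d2dt (K n) (μ' n) (π' n) m)) := by
  choose F hF hd using fun n => (hgen n).exists_isExpMixture_d2ct (hπpos n) (hrev n) (μ n)
  choose F' hF' hd' using fun n => (hK n).exists_isExpMixture_d2dt (hπ'pos n) (hrev' n) (μ' n)
  obtain ⟨ε₀, hε₀, hmix⟩ := hmix'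
  simp only [hd]
  exact ⟨hasCutoffCT_sqrt_iff_hasPreCutoffCT hF,
    hasCutoffDT_iff_hasPreCutoffDT_of_eq_sqrt hF' hd' hε₀ hmix⟩

theorem stmt_11
    -- Part (1): a family of irreducible reversible continuous-time chains
    (S : ℕ → Type) [∀ n, Fintype (S n)] [∀ n, DecidableEq (S n)] [∀ n, Nonempty (S n)]
    (L : ∀ n, Matrix (S n) (S n) ℝ) (μ π : ∀ n, S n → ℝ)
    (hgen : ∀ n, IsGenerator (L n)) (hirr : ∀ n, GenIrreducible (L n))
    (hμ : ∀ n, IsProb (μ n)) (hπ : ∀ n, IsProb (π n)) (hπpos : ∀ n x, 0 < π n x)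
    (hrev : ∀ n, Reversible (L n) (π n))
    -- `liminf_n π_n(|μ_n/π_n|²) > 1`
    (hliminf : 1 < Filter.liminf
      (fun n => ENNReal.ofReal (∑ x, (μ n x) ^ 2 / π n x)) atTop)
    -- Part (2): a family of irreducible reversible discrete-time chains
    (S' : ℕ → Type) [∀ n, Fintype (S' n)] [∀ n, DecidableEq (S' n)] [∀ n, Nonempty (S' n)]
    (K : ∀ n, Matrix (S' n) (S' n) ℝ) (μ' π' : ∀ n, S' n → ℝ)
    (hK : ∀ n, IsStochastic (K n)) (hirr' : ∀ n, MatIrreducible (K n))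
    (hμ' : ∀ n, IsProb (μ' n)) (hπ' : ∀ n, IsProb (π' n)) (hπ'pos : ∀ n x, 0 < π' n x)
    (hrev' : ∀ n, Reversible (K n) (π' n))
    -- `liminf_n π_n(|μ_n K_n/π_n|²) > 1`
    (hliminf' : 1 < Filter.liminf
      (fun n => ENNReal.ofReal (∑ x, (∑ z, μ' n z * K n z x) ^ 2 / π' n x)) atTop)
    -- `T_{n,2}(μ_n,ε₀) → ∞` for some `ε₀ ∈ (0,∞)`
    (hmix' : ∃ ε₀ > (0 : ℝ),
      Tendsto (fun n => (Tmix2dt (K n) (μ' n) (π' n) ε₀ : ℝ)) atTop atTop) :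
    (HasCutoffCT (fun n t => d2ct (L n) (μ n) (π n) t) ↔
      HasPreCutoffCT (fun n t => d2ct (L n) (μ n) (π n) t)) ∧
    (HasCutoffDT (fun n m => d2dt (K n) (μ' n) (π' n) m) ↔
      HasPreCutoffDT (fun n m => d2dt (K n) (μ' n) (π' n) m)) :=
  stmt_11_general S L μ π hgen hπpos hrev S' K μ' π' hK hπ'pos hrev' hmix'
end
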